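/- Let A be an ε-differentially private algorithm with input S taking finitely many values and output W, where S is a random dataset. Then I(W; S) ≤ ε. -/

import Mathlib

open MeasureTheory ProbabilityTheory

/-- KL divergence (as the expected log-likelihood ratio). -/
noncomputable def klDiv {α : Type*} [MeasurableSpace α] (Q P : Measure α) : ℝ :=
  ∫ x, llr Q P x ∂Q

/-- Mutual information between two random variables. -/
noncomputable def mutualInfo {Ω α β : Type*} [MeasurableSpace Ω]
    [MeasurableSpace α] [MeasurableSpace β]
    (μ : Measure Ω) (X : Ω → α) (Y : Ω → β) : ℝ :=
  klDiv (μ.map fun ω => (X ω, Y ω)) ((μ.map X).prod (μ.map Y))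

/-- An ε-differentially private mechanism: for any two input datasets in the
support, the conditional output distributions are within a multiplicative
factor `e^ε` of each other. -/
def DiffPrivate {Ω 𝒮 𝒲 : Type*} [MeasurableSpace Ω] [MeasurableSpace 𝒮]
    [MeasurableSpace 𝒲] (μ : Measure Ω) (S : Ω → 𝒮) (W : Ω → 𝒲) (ε : ℝ) : Prop :=
  ∀ s s' : 𝒮, μ (S ⁻¹' {s}) ≠ 0 → μ (S ⁻¹' {s'}) ≠ 0 →
    ∀ B : Set 𝒲, MeasurableSet B →
      (μ[|S ⁻¹' {s}]) (W ⁻¹' B) ≤ ENNReal.ofReal (Real.exp ε) * (μ[|S ⁻¹' {s'}]) (W ⁻¹' B)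

/-!
Differential privacy bounds `P(W ∈ B | S = s)` by `e^ε P(W ∈ B | S = s')` for every `s'`, so
averaging over `s'` (the law of total probability) gives `P(W ∈ B | S = s) ≤ e^ε P(W ∈ B)`.
Hence the joint law of `(W, S)` is at most `e^ε` times the product of its marginals, the
likelihood ratio of the two is at most `e^ε`, and the log-likelihood ratio, whose mean is the
mutual information, is at most `ε`.
-/

open scoped NNReal ENNReal

namespace MeasureTheory.Measure

variable {α : Type*} [MeasurableSpace α] {μ ν : Measure α}

lemma le_smul_of_forall_singleton_le [Countable α] [MeasurableSingletonClass α] {c : ℝ≥0∞}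
    (h : ∀ x, μ {x} ≤ c * ν {x}) : μ ≤ c • ν := by
  refine le_iff.2 fun s hs => ?_
  rw [smul_apply, smul_eq_mul, ← tsum_indicator_apply_singleton μ s hs,
    ← tsum_indicator_apply_singleton ν s hs, ← ENNReal.tsum_mul_left]
  refine ENNReal.tsum_le_tsum fun x => ?_
  by_cases hx : x ∈ s <;> simp [hx, h x]

lemma ae_rnDeriv_le_of_le_smul [SigmaFinite ν] {c : ℝ≥0} (h : μ ≤ c • ν) :
    ∀ᵐ x ∂ν, μ.rnDeriv ν x ≤ c := by
  rcases eq_or_ne c 0 with rfl | hc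
  · rw [zero_smul] at h
    filter_upwards [le_antisymm h (Measure.zero_le μ) ▸ rnDeriv_zero ν] with x hx
    simp [hx]
  have : SigmaFinite μ := sigmaFinite_of_le _ h
  have hν : ν ≪ c • ν := absolutelyContinuous_smul (c := (c : ℝ≥0∞)) (by simpa using hc)
  filter_upwards [hν.ae_le (rnDeriv_le_one_of_le h), rnDeriv_smul_right' μ ν hc]
    with x hle heq
  rw [heq, Pi.smul_apply, Pi.one_apply, ENNReal.smul_def, smul_eq_mul, ENNReal.coe_inv hc] at hle
  calc μ.rnDeriv ν x = c * ((c : ℝ≥0∞)⁻¹ * μ.rnDeriv ν x) := by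
        rw [← mul_assoc, ENNReal.mul_inv_cancel (by simpa using hc) ENNReal.coe_ne_top, one_mul]
    _ ≤ c := mul_le_of_le_one_right' hle

end MeasureTheory.Measure

open Real in
lemma integrable_llr_of_le_smul {α : Type*} [MeasurableSpace α] {μ ν : Measure α}
    [IsFiniteMeasure ν] {c : ℝ≥0} (h : μ ≤ c • ν) :
    Integrable (llr μ ν) μ := by
  have : IsFiniteMeasure μ := isFiniteMeasure_of_le _ h
  have hμν : μ ≪ ν := Measure.absolutelyContinuous_of_le_smul h
  obtain ⟨C, hC⟩ := (isCompact_Icc (a := (0 : ℝ)) (b := c)).exists_bound_of_continuousOn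
    continuous_mul_log.continuousOn
  rw [← integrable_rnDeriv_mul_log_iff hμν]
  refine Integrable.of_bound (by fun_prop) C ?_
  filter_upwards [Measure.ae_rnDeriv_le_of_le_smul h] with x hx
  exact hC _ ⟨ENNReal.toReal_nonneg, ENNReal.toReal_le_of_le_ofReal c.2 (by simpa using hx)⟩

open Real in
lemma klDiv_le_of_le_smul {α : Type*} [MeasurableSpace α] {μ ν : Measure α}
    [IsProbabilityMeasure μ] [IsFiniteMeasure ν] {ε : ℝ}
    (h : μ ≤ ENNReal.ofReal (exp ε) • ν) : klDiv μ ν ≤ ε := by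
  -- `ENNReal.ofReal r` is by definition `↑r.toNNReal`, so `h` also has the shape `μ ≤ c • ν`
  -- with `c : ℝ≥0` that the lemmas above expect.
  have hμν : μ ≪ ν := Measure.absolutelyContinuous_of_le_smul h
  have hllr : ∀ᵐ x ∂μ, llr μ ν x ≤ ε := by
    filter_upwards [hμν.ae_le (Measure.ae_rnDeriv_le_of_le_smul h), Measure.rnDeriv_pos hμν]
      with x hle hpos
    have hpos' : 0 < (μ.rnDeriv ν x).toReal :=
      ENNReal.toReal_pos hpos.ne' (ne_top_of_le_ne_top ENNReal.coe_ne_top hle)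
    rw [llr, log_le_iff_le_exp hpos']
    exact ENNReal.toReal_le_of_le_ofReal (exp_pos ε).le hle
  calc klDiv μ ν = ∫ x, llr μ ν x ∂μ := rfl
    _ ≤ ∫ _, ε ∂μ := integral_mono_ae (integrable_llr_of_le_smul h) (integrable_const ε) hllr
    _ = ε := by simp

section DiffPrivate

variable {Ω 𝒮 𝒲 : Type*} [MeasurableSpace Ω] [MeasurableSpace 𝒮] [MeasurableSpace 𝒲]
  {μ : Measure Ω} [IsProbabilityMeasure μ] {S : Ω → 𝒮} {W : Ω → 𝒲} {ε : ℝ}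

lemma cond_preimage_le_of_diffPrivate [Fintype 𝒮] [MeasurableSingletonClass 𝒮]
    (hS : Measurable S) (hdp : DiffPrivate μ S W ε) {s : 𝒮} (hs : μ (S ⁻¹' {s}) ≠ 0)
    {B : Set 𝒲} (hB : MeasurableSet B) :
    μ[W ⁻¹' B | S ⁻¹' {s}] ≤ ENNReal.ofReal (Real.exp ε) * μ (W ⁻¹' B) := by
  have htotal : μ (W ⁻¹' B) = ∑ s', μ (S ⁻¹' {s'}) * μ[W ⁻¹' B | S ⁻¹' {s'}] := by
    conv_lhs => rw [← sum_meas_smul_cond_fiber hS μ]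
    simp only [Measure.finsetSum_apply, Measure.smul_apply, smul_eq_mul]
  have hone : ∑ s', μ (S ⁻¹' {s'}) = 1 := by
    rw [sum_measure_preimage_singleton _ fun s' _ => hS (measurableSet_singleton s')]
    simp
  calc μ[W ⁻¹' B | S ⁻¹' {s}] = ∑ s', μ (S ⁻¹' {s'}) * μ[W ⁻¹' B | S ⁻¹' {s}] := by
        rw [← Finset.sum_mul, hone, one_mul]
    _ ≤ ∑ s', μ (S ⁻¹' {s'}) * (ENNReal.ofReal (Real.exp ε) * μ[W ⁻¹' B | S ⁻¹' {s'}]) := by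
        refine Finset.sum_le_sum fun s' _ => ?_
        by_cases hs' : μ (S ⁻¹' {s'}) = 0
        · simp [hs']
        · gcongr
          exact hdp s s' hs hs' B hB
    _ = ENNReal.ofReal (Real.exp ε) * μ (W ⁻¹' B) := by
        rw [htotal, Finset.mul_sum]
        simp_rw [mul_left_comm]

lemma map_prod_le_smul_prod_map_of_diffPrivate [Fintype 𝒮] [MeasurableSingletonClass 𝒮]
    [Countable 𝒲] [MeasurableSingletonClass 𝒲] (hS : Measurable S) (hW : Measurable W)
    (hdp : DiffPrivate μ S W ε) :
    μ.map (fun ω => (W ω, S ω)) ≤ ENNReal.ofReal (Real.exp ε) • (μ.map W).prod (μ.map S) := by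
  refine Measure.le_smul_of_forall_singleton_le fun ⟨w, s⟩ => ?_
  have hfiber : (fun ω => (W ω, S ω)) ⁻¹' {(w, s)} = S ⁻¹' {s} ∩ W ⁻¹' {w} := by
    ext; simp [and_comm]
  rw [Measure.map_apply (hW.prodMk hS) (measurableSet_singleton _), hfiber,
    ← Set.singleton_prod_singleton, Measure.prod_prod,
    Measure.map_apply hW (measurableSet_singleton w), Measure.map_apply hS (measurableSet_singleton s)]
  by_cases hs : μ (S ⁻¹' {s}) = 0
  · simp [measure_mono_null Set.inter_subset_left hs]
  calc μ (S ⁻¹' {s} ∩ W ⁻¹' {w}) = μ[W ⁻¹' {w} | S ⁻¹' {s}] * μ (S ⁻¹' {s}) :=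
        (cond_mul_eq_inter (hS (measurableSet_singleton s)) _ μ).symm
    _ ≤ ENNReal.ofReal (Real.exp ε) * μ (W ⁻¹' {w}) * μ (S ⁻¹' {s}) := by
        gcongr
        exact cond_preimage_le_of_diffPrivate hS hdp hs (measurableSet_singleton w)
    _ = ENNReal.ofReal (Real.exp ε) * (μ (W ⁻¹' {w}) * μ (S ⁻¹' {s})) := mul_assoc _ _ _

end DiffPrivate

theorem mutualInfo_le_of_dp_general
    {Ω 𝒮 𝒲 : Type*} [MeasureSpace Ω]
    [IsProbabilityMeasure (volume : Measure Ω)]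
    [Fintype 𝒮] [MeasurableSpace 𝒮] [MeasurableSingletonClass 𝒮]
    [Fintype 𝒲] [MeasurableSpace 𝒲] [MeasurableSingletonClass 𝒲]
    (S : Ω → 𝒮) (W : Ω → 𝒲) (hS : Measurable S) (hW : Measurable W)
    (ε : ℝ)
    (hdp : DiffPrivate volume S W ε) :
    mutualInfo volume W S ≤ ε :=
  have : IsProbabilityMeasure ((volume : Measure Ω).map fun ω => (W ω, S ω)) :=
    Measure.isProbabilityMeasure_map (hW.prodMk hS).aemeasurable
  klDiv_le_of_le_smul (map_prod_le_smul_prod_map_of_diffPrivate hS hW hdp)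

theorem mutualInfo_le_of_dp
    {Ω 𝒮 𝒲 : Type*} [MeasureSpace Ω]
    [IsProbabilityMeasure (volume : Measure Ω)]
    [Fintype 𝒮] [MeasurableSpace 𝒮] [MeasurableSingletonClass 𝒮]
    [Fintype 𝒲] [MeasurableSpace 𝒲] [MeasurableSingletonClass 𝒲]
    (S : Ω → 𝒮) (W : Ω → 𝒲) (hS : Measurable S) (hW : Measurable W)
    (ε : ℝ) (hε : 0 ≤ ε)
    (hdp : DiffPrivate volume S W ε) :
    mutualInfo volume W S ≤ ε :=
  mutualInfo_le_of_dp_general S W hS hW ε hdp
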